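/- Let n be a positive integer and let ((x_i, y_i))_{i=0}^{n-1} be the n-ap. Then every t-sawtooth function f : ℝ → ℝ has classification error R_z(f) ≥ (n − 4t)/(3n) on these points. -/

import Mathlib

/-!
Cut `ℝ` into the `t` affine pieces of `f`. On one piece the classifier `𝟙[f ≥ 1/2]` thresholds
an affine function, so along increasing points it changes value at most once there; every other
change happens across a piece boundary, of which there are fewer than `t`. Hence consecutive
points `i/n, (i+1)/n` carry at most `2t` changes of the classifier. Since the labels alternate,
each pair without a change contains a misclassified point, so `n ≤ 2t + 2E + 1` for `E` errors,
and `3E ≥ n - 4t` because `t ≥ 1`.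
-/

noncomputable section

/-- A function `f : ℝ → ℝ` is `t`-sawtooth if `ℝ` is partitioned into `t` consecutive
intervals (delimited by extended-real breakpoints `b 0 = ⊥ ≤ b 1 ≤ ⋯ ≤ b t = ⊤`)
and `f` is affine on each interval `[b i, b (i+1))`. -/
def Sawtooth (t : ℕ) (f : ℝ → ℝ) : Prop :=
  ∃ b : Fin (t + 1) → EReal,
    b 0 = ⊥ ∧ b (Fin.last t) = ⊤ ∧ Monotone b ∧
    ∀ i : Fin t, ∃ c d : ℝ, ∀ x : ℝ,
      b i.castSucc ≤ (x : EReal) → (x : EReal) < b i.succ → f x = c * x + d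

/-- `g : ℝ → ℕ` is piecewise constant w.r.t. a partition of `ℝ` into `s` consecutive
intervals. -/
def PiecewiseConst (s : ℕ) (g : ℝ → ℕ) : Prop :=
  ∃ b : Fin (s + 1) → EReal,
    b 0 = ⊥ ∧ b (Fin.last s) = ⊤ ∧ Monotone b ∧
    ∀ i : Fin s, ∃ c : ℕ, ∀ x : ℝ,
      b i.castSucc ≤ (x : EReal) → (x : EReal) < b i.succ → g x = c

/-- `IsLayers σ m l d F` : `F : ℝ → Fin d → ℝ` is the joint output of `l` layers of a
feedforward network with nonlinearity `σ`, each layer having at most `m` nodes. -/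
inductive IsLayers (σ : ℝ → ℝ) (m : ℕ) : ℕ → (d : ℕ) → (ℝ → Fin d → ℝ) → Prop where
  | base (d : ℕ) (hd : d ≤ m) (w b : Fin d → ℝ) :
      IsLayers σ m 1 d (fun x j => σ (b j + w j * x))
  | step (l d d' : ℕ) (F : ℝ → Fin d' → ℝ) (hF : IsLayers σ m l d' F) (hd : d ≤ m)
      (w : Fin d → Fin d' → ℝ) (b : Fin d → ℝ) :
      IsLayers σ m (l + 1) d (fun x j => σ (b j + ∑ i, w j i * F x i))

/-- The class `𝔑(σ; m, l)` of functions computed by feedforward networks with `l` layers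
of at most `m` nodes each, the final layer consisting of a single node. -/
def NN (σ : ℝ → ℝ) (m l : ℕ) : Set (ℝ → ℝ) :=
  {f | ∃ F : ℝ → Fin 1 → ℝ, IsLayers σ m l 1 F ∧ ∀ x, f x = F x 0}

/-- The recurrent class `ℜ(σ; m, l; k)`: a fixed network in `𝔑(σ; m, l)` iterated `k` times. -/
def RNN (σ : ℝ → ℝ) (m l k : ℕ) : Set (ℝ → ℝ) :=
  {f | ∃ g ∈ NN σ m l, f = g^[k]}

/-- The ReLU nonlinearity. -/
def relu (z : ℝ) : ℝ := max 0 z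

/-- The classifier associated with `f`: `x ↦ 𝟙[f x ≥ 1/2]`. -/
def cls (f : ℝ → ℝ) (x : ℝ) : ℕ := if 1 / 2 ≤ f x then 1 else 0

/-- Classification error of `f` on the labeled points `(x i, y i)`. -/
def clsErr (n : ℕ) (x : Fin n → ℝ) (y : Fin n → ℕ) (f : ℝ → ℝ) : ℝ :=
  (n : ℝ)⁻¹ * ∑ i, if cls f (x i) = y i then 0 else 1

/-- The `x`-coordinates of the `n`-alternating-point problem: `x i = i / n`. -/
def apX (n : ℕ) (i : Fin n) : ℝ := (i : ℕ) / n

/-- The labels of the `n`-alternating-point problem: `y i = i mod 2`. -/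
def apY (n : ℕ) (i : Fin n) : ℕ := (i : ℕ) % 2

/-- The mirror map. -/
def fm (x : ℝ) : ℝ :=
  if 0 ≤ x ∧ x ≤ 1 / 2 then 2 * x
  else if 1 / 2 < x ∧ x ≤ 1 then 2 * (1 - x)
  else 0

open Finset

theorem Fin.exists_castSucc_le_and_lt_succ {α : Type*} [LinearOrder α] {t : ℕ}
    (b : Fin (t + 1) → α) {x : α} (h₀ : b 0 ≤ x) (hlast : x < b (Fin.last t)) :
    ∃ i : Fin t, b i.castSucc ≤ x ∧ x < b i.succ := by
  induction t with
  | zero => exact absurd (h₀.trans_lt hlast) (lt_irrefl _)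
  | succ t ih =>
    by_cases hx : b (Fin.last t).castSucc ≤ x
    · exact ⟨Fin.last t, hx, by rwa [Fin.succ_last]⟩
    · obtain ⟨i, hi₁, hi₂⟩ := ih (b ∘ Fin.castSucc) h₀ (not_le.mp hx)
      exact ⟨i.castSucc, hi₁, by rwa [Fin.succ_castSucc]⟩

theorem card_changes_le_two_mul {β : Type*} [DecidableEq β] {t : ℕ} {s : ℕ → Fin t}
    (hs : Monotone s) {c : ℕ → β}
    (hc : ∀ i j, i < j → s i = s (j + 1) → c i ≠ c (i + 1) → c j = c (j + 1)) (m : ℕ) :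
    #{i ∈ range m | c i ≠ c (i + 1)} ≤ 2 * t := by
  have key : ∀ i j, i < j → c i ≠ c (i + 1) → c j ≠ c (j + 1) → s (i + 1) = s (j + 1) →
      (s i = s (i + 1) ↔ s j = s (j + 1)) → False := by
    intro i j hij hi hj hs₁ hs₀
    by_cases hsi : s i = s (i + 1)
    · exact hj (hc i j hij (hsi.trans hs₁) hi)
    · exact hsi (hs₀.mpr (le_antisymm (hs j.le_succ) (hs₁ ▸ hs hij)))
  have hinj : Set.InjOn (fun i ↦ (s (i + 1), decide (s i = s (i + 1))))
      ({i ∈ range m | c i ≠ c (i + 1)} : Finset ℕ) := by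
    intro i hi j hj hij
    rw [mem_coe, mem_filter] at hi hj
    simp only [Prod.mk.injEq, decide_eq_decide] at hij
    rcases lt_trichotomy i j with hlt | heq | hgt
    · exact (key i j hlt hi.2 hj.2 hij.1 hij.2).elim
    · exact heq
    · exact (key j i hgt hj.2 hi.2 hij.1.symm hij.2.symm).elim
  -- a change is determined by the piece of its right endpoint and by whether it crosses pieces
  calc #{i ∈ range m | c i ≠ c (i + 1)} ≤ #(univ : Finset (Fin t × Bool)) :=
        card_le_card_of_injOn _ (fun _ _ ↦ mem_coe.mpr (mem_univ _)) hinj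
    _ = 2 * t := by simp [mul_comm]

theorem le_card_changes_add_two_mul_card_errors (c : ℕ → ℕ) (m : ℕ) :
    m ≤ #{i ∈ range m | c i ≠ c (i + 1)} + 2 * #{i ∈ range m | c i ≠ i % 2} + 1 := by
  have hcover : range m ⊆ {i ∈ range m | c i ≠ c (i + 1)} ∪ {i ∈ range m | c i ≠ i % 2} ∪
      {i ∈ range m | c (i + 1) ≠ (i + 1) % 2} := by
    intro i hi
    simp only [mem_union, mem_filter, mem_range] at hi ⊢
    omega
  have hshift : #{i ∈ range m | c (i + 1) ≠ (i + 1) % 2} ≤ #{i ∈ range m | c i ≠ i % 2} + 1 :=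
    calc #{i ∈ range m | c (i + 1) ≠ (i + 1) % 2} ≤ #{i ∈ range (m + 1) | c i ≠ i % 2} :=
          card_le_card_of_injOn (· + 1) (fun i hi ↦ by simp_all) (add_left_injective 1).injOn
      _ ≤ #{i ∈ range m | c i ≠ i % 2} + 1 := by
          rw [range_add_one, filter_insert]
          split_ifs
          exacts [card_insert_le _ _, Nat.le_succ _]
  have hcard := card_le_card hcover
  rw [card_range] at hcard
  have hunion₁ := card_union_le ({i ∈ range m | c i ≠ c (i + 1)} ∪ {i ∈ range m | c i ≠ i % 2})
    {i ∈ range m | c (i + 1) ≠ (i + 1) % 2}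
  have hunion₂ := card_union_le {i ∈ range m | c i ≠ c (i + 1)} {i ∈ range m | c i ≠ i % 2}
  omega

theorem Sawtooth.exists_monotone_piecewise_affine {t : ℕ} {f : ℝ → ℝ} (hf : Sawtooth t f) :
    ∃ p : ℝ → Fin t, Monotone p ∧ ∃ a c : Fin t → ℝ, ∀ x, f x = a (p x) * x + c (p x) := by
  obtain ⟨b, hb₀, hblast, hb, haffine⟩ := hf
  choose p hp₁ hp₂ using fun x : ℝ ↦
    Fin.exists_castSucc_le_and_lt_succ b (hb₀ ▸ bot_le) (hblast ▸ EReal.coe_lt_top x)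
  choose a c hac using haffine
  refine ⟨p, fun u v huv ↦ ?_, a, c, fun x ↦ hac _ x (hp₁ x) (hp₂ x)⟩
  by_contra! hpvu
  have : (v : EReal) < u :=
    (hp₂ v).trans_le ((hb (Fin.succ_le_castSucc_iff.mpr hpvu)).trans (hp₁ u))
  exact (EReal.coe_lt_coe_iff.mp this).not_ge huv

theorem Monotone.iff_of_not_iff {α : Type*} [Preorder α] {P : α → Prop} (hP : Monotone P)
    {u₁ u₂ u₃ u₄ : α} (h₁₂ : u₁ ≤ u₂) (h₂₃ : u₂ ≤ u₃) (h₃₄ : u₃ ≤ u₄)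
    (h : ¬(P u₁ ↔ P u₂)) : P u₃ ↔ P u₄ := by
  have hu₂ : P u₂ := by
    by_contra hu₂
    exact h (iff_of_false (fun hu₁ ↦ hu₂ (hP h₁₂ hu₁)) hu₂)
  exact iff_of_true (hP h₂₃ hu₂) (hP (h₂₃.trans h₃₄) hu₂)

theorem Antitone.iff_of_not_iff {α : Type*} [Preorder α] {P : α → Prop} (hP : Antitone P)
    {u₁ u₂ u₃ u₄ : α} (h₁₂ : u₁ ≤ u₂) (h₂₃ : u₂ ≤ u₃) (h₃₄ : u₃ ≤ u₄)
    (h : ¬(P u₁ ↔ P u₂)) : P u₃ ↔ P u₄ := by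
  by_contra h'
  exact h (Iff.comm.mp (hP.dual_left.iff_of_not_iff h₃₄ h₂₃ h₁₂ (mt Iff.comm.mp h')))

theorem monotone_or_antitone_le_affine (r a c : ℝ) :
    Monotone (fun x ↦ r ≤ a * x + c) ∨ Antitone (fun x ↦ r ≤ a * x + c) := by
  rcases le_total 0 a with ha | ha
  · exact Or.inl fun x y hxy h ↦ h.trans (by gcongr)
  · exact Or.inr fun x y hxy h ↦ h.trans (by nlinarith)

theorem cls_eq_cls_iff (f : ℝ → ℝ) (u v : ℝ) :
    cls f u = cls f v ↔ (1 / 2 ≤ f u ↔ 1 / 2 ≤ f v) := by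
  unfold cls
  split_ifs with hu hv hv <;> simp only [hu, hv] <;> decide

section PiecewiseAffine

variable {t : ℕ} {f : ℝ → ℝ} {p : ℝ → Fin t} {a c : Fin t → ℝ}

theorem cls_eq_of_cls_ne_of_piece_eq (hp : Monotone p) (hf : ∀ x, f x = a (p x) * x + c (p x))
    {u₁ u₂ u₃ u₄ : ℝ} (h₁₂ : u₁ ≤ u₂) (h₂₃ : u₂ ≤ u₃) (h₃₄ : u₃ ≤ u₄) (hpu : p u₁ = p u₄)
    (h : cls f u₁ ≠ cls f u₂) : cls f u₃ = cls f u₄ := by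
  have hpiece : ∀ u, u₁ ≤ u → u ≤ u₄ → f u = a (p u₁) * u + c (p u₁) := fun u h₁ h₄ ↦ by
    rw [hf, le_antisymm (hp h₄ |>.trans_eq hpu.symm) (hp h₁)]
  rw [Ne, cls_eq_cls_iff] at h
  rw [cls_eq_cls_iff]
  rw [hpiece u₁ le_rfl (h₁₂.trans (h₂₃.trans h₃₄)), hpiece u₂ h₁₂ (h₂₃.trans h₃₄)] at h
  rw [hpiece u₃ (h₁₂.trans h₂₃) h₃₄, hpiece u₄ (h₁₂.trans (h₂₃.trans h₃₄)) le_rfl]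
  rcases monotone_or_antitone_le_affine (1 / 2) (a (p u₁)) (c (p u₁)) with hmono | hanti
  · exact hmono.iff_of_not_iff h₁₂ h₂₃ h₃₄ h
  · exact hanti.iff_of_not_iff h₁₂ h₂₃ h₃₄ h

theorem card_cls_changes_le (hp : Monotone p) (hf : ∀ x, f x = a (p x) * x + c (p x))
    {x : ℕ → ℝ} (hx : Monotone x) (m : ℕ) :
    #{i ∈ range m | cls f (x i) ≠ cls f (x (i + 1))} ≤ 2 * t :=
  card_changes_le_two_mul (hp.comp hx) (fun i j hij hs ↦
    cls_eq_of_cls_ne_of_piece_eq hp hf (hx i.le_succ) (hx hij) (hx j.le_succ) hs) m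

end PiecewiseAffine

theorem clsErr_apX_apY (n : ℕ) (f : ℝ → ℝ) :
    clsErr n (apX n) (apY n) f = #{i ∈ range n | cls f (((i : ℕ) : ℝ) / n) ≠ i % 2} / n := by
  have hsum : ∑ i : Fin n, (if cls f (apX n i) = apY n i then (0 : ℝ) else 1) =
      ∑ i ∈ range n, if cls f ((i : ℝ) / n) ≠ i % 2 then 1 else 0 := by
    simp only [ne_eq, ite_not]
    exact Fin.sum_univ_eq_sum_range (fun i ↦ if cls f ((i : ℝ) / n) = i % 2 then (0 : ℝ) else 1) n
  rw [clsErr, hsum, sum_boole, inv_mul_eq_div]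

theorem sawtooth_clsErr_lb_general (n t : ℕ) (f : ℝ → ℝ) (hf : Sawtooth t f) :
    ((n : ℝ) - 4 * t) / (3 * n) ≤ clsErr n (apX n) (apY n) f := by
  obtain ⟨p, hp, a, c, hpiece⟩ := hf.exists_monotone_piecewise_affine
  have ht : 1 ≤ t := (p 0).pos
  have hx : Monotone (fun i : ℕ ↦ (i : ℝ) / n) := fun i j hij ↦
    div_le_div_of_nonneg_right (by exact_mod_cast hij) n.cast_nonneg
  set E := #{i ∈ range n | cls f (((i : ℕ) : ℝ) / n) ≠ i % 2}
  have hcount : n ≤ 2 * t + 2 * E + 1 :=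
    (le_card_changes_add_two_mul_card_errors _ n).trans
      (by gcongr; exact card_cls_changes_le hp hpiece hx n)
  have hE : (n : ℝ) - 4 * t ≤ 3 * E := by
    have : (n : ℝ) ≤ 2 * t + 2 * E + 1 := by exact_mod_cast hcount
    have : (1 : ℝ) ≤ t := by exact_mod_cast ht
    linarith
  rw [clsErr_apX_apY, ← mul_div_mul_left (E : ℝ) n three_ne_zero]
  exact div_le_div_of_nonneg_right hE (by positivity)

/-- every `t`-sawtooth function has classification error at least
`(n - 4t)/(3n)` on the `n`-alternating-point problem. -/
theorem sawtooth_clsErr_lb (n t : ℕ) (hn : 0 < n) (f : ℝ → ℝ) (hf : Sawtooth t f) :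
    ((n : ℝ) - 4 * t) / (3 * n) ≤ clsErr n (apX n) (apY n) f :=
  sawtooth_clsErr_lb_general n t f hf
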